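/- Let f : S^{d-1} → R be continuously differentiable, extended to R^d \ {0} by F(z) = f(z/‖z‖), and set D_{i,j}F(x) = x_j∂_i F(x) - x_i∂_j F(x). Then ∫_{S^{d-1}} |∇₀ f(x)|² dσ(x) = Σ_{1 ≤ i < j ≤ d} ∫_{S^{d-1}} |D_{i,j}F(x)|² dσ(x), where ∇₀f(x) = ∇F(x) for x ∈ S^{d-1} is the tangential gradient. -/

import Mathlib

open MeasureTheory Metric
open scoped InnerProductSpace BigOperators

/-!
On the unit sphere the gradient `g = ∇F x` of a `0`-homogeneous function is orthogonal to `x`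
(Euler's identity `DF(x) x = 0`), so Lagrange's identity
`∑_{i<j} (g_i x_j - g_j x_i)² = ‖g‖² ‖x‖² - ⟪g, x⟫²` reduces to `∑_{i<j} D_{i,j}F(x)² = ‖g‖²`
pointwise. Integrate over the sphere, where everything is continuous.
-/

theorem Finset.two_nsmul_sum_sum_ite_lt {ι M : Type*} [Fintype ι] [LinearOrder ι]
    [AddCommMonoid M] (g : ι → ι → M) (hsymm : ∀ i j, g i j = g j i) (hdiag : ∀ i, g i i = 0) :
    2 • ∑ i, ∑ j, (if i < j then g i j else 0) = ∑ i, ∑ j, g i j := by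
  have hswap : ∑ i, ∑ j, (if i < j then g i j else 0) = ∑ i, ∑ j, if j < i then g i j else 0 := by
    rw [Finset.sum_comm]
    simp_rw [hsymm]
  rw [two_nsmul]
  nth_rw 2 [hswap]
  simp_rw [← Finset.sum_add_distrib]
  refine Finset.sum_congr rfl fun i _ => Finset.sum_congr rfl fun j _ => ?_
  rcases lt_trichotomy i j with h | rfl | h
  · simp [h, h.not_gt]
  · simp [hdiag]
  · simp [h, h.not_gt]

theorem Finset.sum_sum_ite_lt_sq_mul_sub_mul {ι R : Type*} [Fintype ι] [LinearOrder ι]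
    [CommRing R] [IsDomain R] [CharZero R] (a b : ι → R) :
    ∑ i, ∑ j, (if i < j then (a i * b j - a j * b i) ^ 2 else 0)
      = (∑ i, a i ^ 2) * (∑ i, b i ^ 2) - (∑ i, a i * b i) ^ 2 := by
  refine mul_left_cancel₀ (two_ne_zero (α := R)) ?_
  rw [two_mul, ← two_nsmul,
    Finset.two_nsmul_sum_sum_ite_lt _ (fun i j => by ring) (fun i => by ring)]
  have hexpand : ∀ i j, (a i * b j - a j * b i) ^ 2
      = a i ^ 2 * b j ^ 2 + a j ^ 2 * b i ^ 2 - 2 * (a i * b i) * (a j * b j) := fun i j => by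
    ring
  simp only [hexpand, Finset.sum_add_distrib, Finset.sum_sub_distrib, ← Finset.mul_sum,
    ← Finset.sum_mul]
  ring

theorem EuclideanSpace.sum_sum_ite_lt_sq_mul_sub_mul {ι : Type*} [Fintype ι] [LinearOrder ι]
    (x y : EuclideanSpace ℝ ι) :
    ∑ i, ∑ j, (if i < j then (x i * y j - x j * y i) ^ 2 else 0)
      = ‖x‖ ^ 2 * ‖y‖ ^ 2 - ⟪x, y⟫_ℝ ^ 2 := by
  simp only [Finset.sum_sum_ite_lt_sq_mul_sub_mul, EuclideanSpace.real_norm_sq_eq,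
    PiLp.inner_apply, RCLike.inner_apply, conj_trivial, mul_comm (y _)]

theorem gradient_apply_single {ι : Type*} [Fintype ι] [DecidableEq ι]
    (F : EuclideanSpace ℝ ι → ℝ) (x : EuclideanSpace ℝ ι) (i : ι) :
    gradient F x i = fderiv ℝ F x (EuclideanSpace.single i 1) := by
  rw [← inner_gradient_left, EuclideanSpace.inner_single_right]
  simp

section Homogeneous

variable {E : Type*} [NormedAddCommGroup E] [NormedSpace ℝ E]

theorem apply_smul_eq_of_forall_apply_eq_apply_inv_norm_smul {α : Type*} {F : E → α}
    (hhom : ∀ z : E, z ≠ 0 → F z = F (‖z‖⁻¹ • z)) {x : E} (hx : x ≠ 0) {t : ℝ} (ht : 0 < t) :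
    F (t • x) = F x := by
  rw [hhom _ (smul_ne_zero ht.ne' hx), hhom x hx, norm_smul, Real.norm_of_nonneg ht.le,
    smul_smul]
  congr 2
  field_simp

variable {G : Type*} [NormedAddCommGroup G] [NormedSpace ℝ G]

theorem fderiv_apply_self_eq_zero_of_eventually_apply_smul_eq {F : E → G} {x : E}
    (hF : DifferentiableAt ℝ F x) (hscale : (fun t : ℝ => F (t • x)) =ᶠ[nhds 1] fun _ => F x) :
    fderiv ℝ F x x = 0 := by
  have hray : HasDerivAt (fun t : ℝ => F (t • x)) (fderiv ℝ F x x) 1 := by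
    have hline : HasDerivAt (fun t : ℝ => t • x) x 1 := by
      simpa using (hasDerivAt_id (1 : ℝ)).smul_const x
    exact hF.hasFDerivAt.comp_hasDerivAt_of_eq 1 hline (one_smul ℝ x).symm
  exact (hasDerivAt_const (1 : ℝ) (F x)).unique (hray.congr_of_eventuallyEq hscale.symm) |>.symm

theorem fderiv_apply_self_eq_zero_of_forall_apply_eq_apply_inv_norm_smul {F : E → G}
    (hhom : ∀ z : E, z ≠ 0 → F z = F (‖z‖⁻¹ • z)) {x : E} (hx : x ≠ 0)
    (hF : DifferentiableAt ℝ F x) : fderiv ℝ F x x = 0 :=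
  fderiv_apply_self_eq_zero_of_eventually_apply_smul_eq hF <|
    Filter.eventually_of_mem (Ioi_mem_nhds one_pos) fun _ ht =>
      apply_smul_eq_of_forall_apply_eq_apply_inv_norm_smul hhom hx ht

end Homogeneous

theorem MeasureTheory.integral_sum_sum_ite {α ι : Type*} [MeasurableSpace α] {μ : Measure α}
    [Fintype ι] (p : ι → ι → Prop) [DecidableRel p] (f : ι → ι → α → ℝ)
    (hf : ∀ i j, p i j → Integrable (f i j) μ) :
    ∫ x, ∑ i, ∑ j, (if p i j then f i j x else 0) ∂μ
      = ∑ i, ∑ j, if p i j then ∫ x, f i j x ∂μ else 0 := by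
  have hint : ∀ i j, Integrable (fun x => if p i j then f i j x else 0) μ := fun i j => by
    split_ifs with h
    exacts [hf i j h, integrable_zero _ _ _]
  rw [integral_finsetSum _ fun i _ => integrable_finsetSum _ fun j _ => hint i j]
  refine Finset.sum_congr rfl fun i _ => ?_
  rw [integral_finsetSum _ fun j _ => hint i j]
  refine Finset.sum_congr rfl fun j _ => ?_
  split_ifs <;> simp

theorem stmt12 (d : ℕ) (F : EuclideanSpace ℝ (Fin d) → ℝ)
    (hF : ContDiffOn ℝ 1 F {(0 : EuclideanSpace ℝ (Fin d))}ᶜ)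
    (hhom : ∀ z : EuclideanSpace ℝ (Fin d), z ≠ 0 → F z = F (‖z‖⁻¹ • z))
    (D : Fin d → Fin d → EuclideanSpace ℝ (Fin d) → ℝ)
    (hD : ∀ i j x, D i j x =
      x j * fderiv ℝ F x (EuclideanSpace.single i 1) -
        x i * fderiv ℝ F x (EuclideanSpace.single j 1)) :
    ∫ x : Metric.sphere (0 : EuclideanSpace ℝ (Fin d)) 1,
        ‖gradient F (x : EuclideanSpace ℝ (Fin d))‖ ^ 2
        ∂(volume : Measure (EuclideanSpace ℝ (Fin d))).toSphere
      = ∑ i : Fin d, ∑ j : Fin d, if i < j then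
          ∫ x : Metric.sphere (0 : EuclideanSpace ℝ (Fin d)) 1,
            (D i j x) ^ 2 ∂(volume : Measure (EuclideanSpace ℝ (Fin d))).toSphere
        else 0 := by
  have hne : ∀ x : sphere (0 : EuclideanSpace ℝ (Fin d)) 1, (x : EuclideanSpace ℝ (Fin d)) ≠ 0 :=
    fun x => ne_zero_of_mem_unit_sphere x
  have hpoint : ∀ x : sphere (0 : EuclideanSpace ℝ (Fin d)) 1,
      ‖gradient F x‖ ^ 2 = ∑ i, ∑ j, if i < j then D i j x ^ 2 else 0 := fun x => by
    have horth : ⟪gradient F x, (x : EuclideanSpace ℝ (Fin d))⟫_ℝ = 0 := by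
      rw [inner_gradient_left]
      exact fderiv_apply_self_eq_zero_of_forall_apply_eq_apply_inv_norm_smul hhom (hne x) <|
        (hF.differentiableOn one_ne_zero).differentiableAt
          (isOpen_compl_singleton.mem_nhds (hne x))
    simp_rw [hD, ← gradient_apply_single, mul_comm (x.1 _),
      EuclideanSpace.sum_sum_ite_lt_sq_mul_sub_mul, horth, norm_eq_of_mem_sphere x]
    ring
  have hcont : ∀ i j, Continuous fun x : sphere (0 : EuclideanSpace ℝ (Fin d)) 1 => D i j x := by
    have hderiv : Continuous fun x : sphere (0 : EuclideanSpace ℝ (Fin d)) 1 => fderiv ℝ F x :=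
      (hF.continuousOn_fderiv_of_isOpen isOpen_compl_singleton le_rfl).comp_continuous
        continuous_subtype_val hne
    intro i j
    simp only [hD]
    fun_prop
  rw [integral_congr_ae (.of_forall hpoint), integral_sum_sum_ite]
  exact fun i j _ => ((hcont i j).pow 2).integrable_of_hasCompactSupport
    (HasCompactSupport.of_compactSpace _)
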